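/- arXiv:2201.06826 — 6 statements merged into one kernel-verified Lean document; each statement's English description precedes it below -/
import Mathlib

section
/- Let α : A* → G be a surjective monoid morphism from the free monoid on a finite alphabet A to a finite monoid G. Suppose there is a finite group H and a morphism β : A* → H such that β^{-1}(1_H) ⊆ α^{-1}(1_G). Then for every g ∈ G, g^{ω(G)} = 1_G, and hence G is a group. -/
theorem group_quotient_of_group_kernel (A : Type*) [Fintype A]
    (G : Type*) [Monoid G] [Fintype G] (H : Type*) [Group H] [Fintype H]
    (α : List A → G) (hα1 : α [] = 1) (hαm : ∀ u v : List A, α (u ++ v) = α u * α v)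
    (hαsurj : Function.Surjective α)
    (β : List A → H) (hβ1 : β [] = 1) (hβm : ∀ u v : List A, β (u ++ v) = β u * β v)
    (hker : ∀ w : List A, β w = 1 → α w = 1)
    (n : ℕ) (hn : 0 < n) (hidem : ∀ s : G, IsIdempotentElem (s ^ n)) :
    (∀ g : G, g ^ n = 1) ∧ (∀ g : G, ∃ g' : G, g * g' = 1 ∧ g' * g = 1) := by
  have key : ∀ g : G, g ^ n = 1 := by
    intro g
    obtain ⟨w, hw⟩ := hαsurj g
    -- power lemma
    have hαpow : ∀ m : ℕ, α (List.flatten (List.replicate m w)) = α w ^ m := by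
      intro m
      induction m with
      | zero => simpa using hα1
      | succ k ih =>
          rw [List.replicate_succ]
          show α (w ++ (List.replicate k w).flatten) = _
          rw [hαm, ih, ← pow_succ']
    have hβpow : ∀ m : ℕ, β (List.flatten (List.replicate m w)) = β w ^ m := by
      intro m
      induction m with
      | zero => simpa using hβ1
      | succ k ih =>
          rw [List.replicate_succ]
          show β (w ++ (List.replicate k w).flatten) = _
          rw [hβm, ih, ← pow_succ']
    set m := orderOf (β w) with hm
    have hmpos : 0 < m := orderOf_pos (β w)
    have hβ1' : β (List.flatten (List.replicate m w)) = 1 := by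
      rw [hβpow, pow_orderOf_eq_one]
    have hgm : g ^ m = 1 := by
      rw [← hw, ← hαpow]; exact hker _ hβ1'
    have hinv : g ^ n * g ^ (n * (m - 1)) = 1 := by
      rw [← pow_add]
      have : n + n * (m - 1) = n * m := by
        have h1 : m - 1 + 1 = m := Nat.succ_pred_eq_of_pos hmpos
        calc n + n * (m - 1) = n * (m - 1 + 1) := by ring
          _ = n * m := by rw [h1]
      rw [this, mul_comm, pow_mul, hgm, one_pow]
    have hid := hidem g
    unfold IsIdempotentElem at hid
    calc g ^ n = g ^ n * (g ^ n * g ^ (n * (m - 1))) := by rw [hinv, mul_one]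
      _ = (g ^ n * g ^ n) * g ^ (n * (m - 1)) := by rw [mul_assoc]
      _ = g ^ n * g ^ (n * (m - 1)) := by rw [hid]
      _ = 1 := hinv
  refine ⟨key, fun g => ⟨g ^ (n - 1), ?_, ?_⟩⟩
  · have : g * g ^ (n - 1) = g ^ n := by
      rw [← pow_succ']; congr 1; omega
    rw [this, key]
  · have : g ^ (n - 1) * g = g ^ n := by
      rw [← pow_succ]; congr 1; omega
    rw [this, key]
end

section
/- Let A be a finite alphabet, G a finite group, and η : A* → G a morphism. Let L' = η^{-1}(1_G). Define on A* the relation u ⪯ v iff v ∈ ↑_{L'} u, where for u = a_1⋯a_n, ↑_{L'} u = L' a_1 L' a_2 ⋯ a_n L'. Then ⪯ is transitive. -/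
/-- The marked product `↑_L w = L a₁ L a₂ ⋯ aₙ L` for `w = a₁ ⋯ aₙ`. -/
def markedProd {A : Type*} (L : Set (List A)) : List A → Set (List A)
  | [] => L
  | a :: w => {v | ∃ x y, x ∈ L ∧ y ∈ markedProd L w ∧ v = x ++ a :: y}

/-! Transitivity of `u ⪯ v ↔ v ∈ ↑_L u` holds for every submonoid `L` of `A*` that is stable
under `↑_L`, i.e. `↑_L x ⊆ L` for `x ∈ L`: a word of `↑_L v` with `v ∈ ↑_L u` is obtained by
replacing each `L`-factor of `v` by a word of `↑_L` of it, and the result lies in `L` again.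
For `L = η⁻¹(1)` the stability holds because `↑_L v` only contains words with the same image
under `η` as `v`. -/

section

variable {A : Type*} {L : Set (List A)}

theorem exists_append_of_mem_markedProd_append (hnil : [] ∈ L) :
    ∀ {s t w : List A}, w ∈ markedProd L (s ++ t) →
      ∃ w₁ ∈ markedProd L s, ∃ w₂ ∈ markedProd L t, w = w₁ ++ w₂
  | [], _, w, hw => ⟨[], hnil, w, hw, rfl⟩
  | a :: _, _, _, ⟨x, y, hx, hy, hxy⟩ => by
    obtain ⟨y₁, hy₁, y₂, hy₂, rfl⟩ := exists_append_of_mem_markedProd_append hnil hy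
    exact ⟨x ++ a :: y₁, ⟨x, y₁, hx, hy₁, rfl⟩, y₂, hy₂, by simp [hxy]⟩

theorem markedProd_trans (hnil : [] ∈ L) (happend : ∀ x ∈ L, ∀ y ∈ L, x ++ y ∈ L)
    (hstable : ∀ x ∈ L, markedProd L x ⊆ L) :
    ∀ {u v w : List A}, v ∈ markedProd L u → w ∈ markedProd L v → w ∈ markedProd L u
  | [], _, _, huv, hvw => hstable _ huv hvw
  | a :: _, _, _, ⟨x, y, hx, hy, rfl⟩, hvw => by
    obtain ⟨w₁, hw₁, w₂, ⟨p, q, hp, hq, rfl⟩, rfl⟩ :=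
      exists_append_of_mem_markedProd_append hnil hvw
    exact ⟨w₁ ++ p, q, happend _ (hstable x hx hw₁) _ hp,
      markedProd_trans hnil happend hstable hy hq, by simp⟩

end

theorem map_eq_of_mem_markedProd_ker {A G : Type*} [Group G] {η : List A → G}
    (hη1 : η [] = 1) (hηm : ∀ u v : List A, η (u ++ v) = η u * η v) :
    ∀ {v w : List A}, w ∈ markedProd {x | η x = 1} v → η w = η v
  | [], _, hw => hw.trans hη1.symm
  | a :: v, _, ⟨x, y, hx, hy, rfl⟩ => by
    have hcons (z : List A) : η (a :: z) = η [a] * η z := hηm [a] z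
    rw [hηm, hx.out, one_mul, hcons y, hcons v, map_eq_of_mem_markedProd_ker hη1 hηm hy]

theorem markedProd_rel_trans_general (A : Type*) (G : Type*) [Group G]
    (η : List A → G) (hη1 : η [] = 1) (hηm : ∀ u v : List A, η (u ++ v) = η u * η v)
    (u v w : List A)
    (huv : v ∈ markedProd {x : List A | η x = 1} u)
    (hvw : w ∈ markedProd {x : List A | η x = 1} v) :
    w ∈ markedProd {x : List A | η x = 1} u := by
  refine markedProd_trans hη1 (fun x hx y hy => ?_) (fun x hx w hw => ?_) huv hvw
  · change η (x ++ y) = 1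
    rw [hηm, hx.out, hy.out, one_mul]
  · exact (map_eq_of_mem_markedProd_ker hη1 hηm hw).trans hx

theorem markedProd_rel_trans (A : Type*) [Fintype A] (G : Type*) [Group G] [Fintype G]
    (η : List A → G) (hη1 : η [] = 1) (hηm : ∀ u v : List A, η (u ++ v) = η u * η v)
    (u v w : List A)
    (huv : v ∈ markedProd {x : List A | η x = 1} u)
    (hvw : w ∈ markedProd {x : List A | η x = 1} v) :
    w ∈ markedProd {x : List A | η x = 1} u :=
  markedProd_rel_trans_general A G η hη1 hηm u v w huv hvw
end

section
/- Let A be a finite alphabet, G a finite group, η : A* → G a morphism, and L' = η^{-1}(1_G). Define u ⪯ v iff v ∈ ↑_{L'} u. Then ⪯ is a well-quasi-order: for every infinite sequence (u_i)_{i∈ℕ} of words in A*, there exist indices i < j with u_i ⪯ u_j. -/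
theorem List.wellQuasiOrdered_sublist (α : Type*) [Finite α] :
    WellQuasiOrdered (List.Sublist : List α → List α → Prop) := by
  intro F
  have higman := Set.finite_univ.partiallyWellOrderedOn.partiallyWellOrderedOn_sublistForall₂
    (fun a b : α => a = b)
  simp only [Set.mem_univ, implies_true, Set.ofPred_true, Set.partiallyWellOrderedOn_univ_iff]
    at higman
  obtain ⟨i, j, hij, hF⟩ := higman F
  obtain ⟨l, hl, hsub⟩ := List.sublistForall₂_iff.1 hF
  rw [List.forall₂_eq_eq_eq] at hl
  exact ⟨i, j, hij, hl ▸ hsub⟩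

theorem append_mem_markedProd {A : Type*} {L : Set (List A)}
    (hL : ∀ x ∈ L, ∀ y ∈ L, x ++ y ∈ L) {x : List A} (hx : x ∈ L) :
    ∀ {u y : List A}, y ∈ markedProd L u → x ++ y ∈ markedProd L u
  | [], _, hy => hL x hx _ hy
  | _ :: _, _, ⟨x', y', hx', hy', hv⟩ => ⟨x ++ x', y', hL x hx x' hx', hy', by simp [hv]⟩

section

variable {A G : Type*} [Group G] (η : List A → G)

theorem map_nil_eq_one (hηm : ∀ u v : List A, η (u ++ v) = η u * η v) : η [] = 1 := by
  simpa using hηm [] []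

theorem append_mem_markedProd_of_map_eq_one (hηm : ∀ u v : List A, η (u ++ v) = η u * η v)
    {x y u : List A} (hx : η x = 1) (hy : y ∈ markedProd {z | η z = 1} u) :
    x ++ y ∈ markedProd {z | η z = 1} u :=
  append_mem_markedProd (fun x hx y hy => by simp_all) hx hy

/-- The letters of `w`, each paired with `g * η p` for the prefix `p` preceding it, followed by the
marker `none` paired with `g * η w`. -/
def tagByPrefix : G → List A → List (G × Option A)
  | g, [] => [(g, none)]
  | g, a :: w => (g, some a) :: tagByPrefix (g * η [a]) w

/-- The prefix `x` of `v` before the first matched letter absorbs the offset between the base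
points `h` and `g`. -/
theorem exists_append_of_tagByPrefix_sublist (hηm : ∀ u v : List A, η (u ++ v) = η u * η v) :
    ∀ (v u : List A) (g h : G), (tagByPrefix η g u).Sublist (tagByPrefix η h v) →
      ∃ x y, η x = h⁻¹ * g ∧ y ∈ markedProd {z | η z = 1} u ∧ v = x ++ y
  | [], u, g, h, hsub => by
    have hη1 := map_nil_eq_one η hηm
    cases u with
    | nil =>
      obtain rfl : g = h := by simpa [tagByPrefix] using hsub
      exact ⟨[], [], by simpa using hη1, hη1, rfl⟩
    | cons a w => simp [tagByPrefix] at hsub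
  | b :: v, u, g, h, hsub => by
    rcases List.sublist_cons_iff.1 hsub with hskip | ⟨r, hu, hr⟩
    · obtain ⟨x, y, hx, hy, rfl⟩ :=
        exists_append_of_tagByPrefix_sublist hηm v u g (h * η [b]) hskip
      refine ⟨b :: x, y, ?_, hy, rfl⟩
      rw [← List.singleton_append, hηm, hx]
      group
    · cases u with
      | nil => simp [tagByPrefix] at hu
      | cons a w =>
        obtain ⟨⟨rfl, rfl⟩, rfl⟩ : (g = h ∧ a = b) ∧ tagByPrefix η (g * η [a]) w = r :=
          by simpa [tagByPrefix] using hu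
        obtain ⟨x, y, hx, hy, rfl⟩ := exists_append_of_tagByPrefix_sublist hηm v w _ _ hr
        have hη1 := map_nil_eq_one η hηm
        refine ⟨[], a :: (x ++ y), by simpa using hη1, ⟨[], x ++ y, hη1, ?_, rfl⟩, rfl⟩
        exact append_mem_markedProd_of_map_eq_one η hηm (by simpa using hx) hy

end

theorem markedProd_rel_wqo_general (A : Type*) [Fintype A] (G : Type*) [Group G] [Fintype G]
    (η : List A → G) (hηm : ∀ u v : List A, η (u ++ v) = η u * η v)
    (f : ℕ → List A) :
    ∃ i j : ℕ, i < j ∧ f j ∈ markedProd {x : List A | η x = 1} (f i) := by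
  obtain ⟨i, j, hij, hsub⟩ :=
    List.wellQuasiOrdered_sublist (G × Option A) fun n => tagByPrefix η 1 (f n)
  obtain ⟨x, y, hx, hy, hfj⟩ := exists_append_of_tagByPrefix_sublist η hηm _ _ _ _ hsub
  rw [inv_mul_cancel] at hx
  exact ⟨i, j, hij, hfj ▸ append_mem_markedProd_of_map_eq_one η hηm hx hy⟩

theorem markedProd_rel_wqo (A : Type*) [Fintype A] (G : Type*) [Group G] [Fintype G]
    (η : List A → G) (hη1 : η [] = 1) (hηm : ∀ u v : List A, η (u ++ v) = η u * η v)
    (f : ℕ → List A) :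
    ∃ i j : ℕ, i < j ∧ f j ∈ markedProd {x : List A | η x = 1} (f i) :=
  markedProd_rel_wqo_general A G η hηm f
end

section
/- Let L ⊆ A* be a language recognized by a morphism into a finite group (a group language) with ε ∈ L, and let H ⊆ A* be arbitrary. Then there exists a finite set F ⊆ H such that H ⊆ ⋃_{w ∈ F} ↑_L w, where for w = a_1⋯a_n, ↑_L w = L a_1 L ⋯ a_n L. -/
/-- Marked product where the first gap comes from `C` and later gaps from `L₁`. -/
def mpAux {A : Type*} (L₁ : Set (List A)) : Set (List A) → List A → Set (List A)
  | C, [] => C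
  | C, a :: w => {v | ∃ x y, x ∈ C ∧ y ∈ mpAux L₁ L₁ w ∧ v = x ++ a :: y}

lemma mpAux_subset {A : Type*} {L L₁ C : Set (List A)} (hC : C ⊆ L) (hL₁ : L₁ ⊆ L) :
    ∀ u : List A, mpAux L₁ C u ⊆ markedProd L u := by
  intro u
  induction u generalizing C with
  | nil => exact hC
  | cons a w ih =>
    rintro v ⟨x, y, hx, hy, rfl⟩
    exact ⟨x, y, hC hx, ih hL₁ hy, rfl⟩

/-- Encode a word by pairing each letter with the image of the prefix ending at it. -/
def encAux {A : Type*} {G : Type*} [Group G] (α : List A → G) : G → List A → List (A × G)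
  | _, [] => []
  | g, a :: u => (a, g * α [a]) :: encAux α (g * α [a]) u

lemma key_lemma {A : Type*} {G : Type*} [Group G] (α : List A → G)
    (hα1 : α [] = 1) (hαm : ∀ u v : List A, α (u ++ v) = α u * α v) :
    ∀ (w u : List A) (g h : G),
      List.SublistForall₂ Eq (encAux α g u) (encAux α h w) →
      g * α u = h * α w →
      w ∈ mpAux {x | α x = 1} {x | α x = h⁻¹ * g} u := by
  have hcons : ∀ (a : A) (u : List A), α (a :: u) = α [a] * α u := by
    intro a u; simpa using hαm [a] u
  intro w
  induction w with
  | nil =>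
    intro u g h hsub htot
    cases u with
    | nil =>
      show α [] = h⁻¹ * g
      rw [hα1] at htot ⊢
      rw [mul_one, mul_one] at htot
      rw [htot, inv_mul_cancel]
    | cons a u' =>
      exfalso
      cases hsub
  | cons b w' ih =>
    intro u g h hsub htot
    cases u with
    | nil =>
      show α (b :: w') = h⁻¹ * g
      rw [hα1, mul_one] at htot
      rw [htot, inv_mul_cancel_left]
    | cons a u' =>
      -- encAux α g (a :: u') = (a, g * α [a]) :: encAux α (g * α [a]) u'
      -- encAux α h (b :: w') = (b, h * α [b]) :: encAux α (h * α [b]) w'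
      cases hsub with
      | cons hab hsub' =>
        obtain ⟨hab1, hab2⟩ : a = b ∧ g * α [a] = h * α [b] := Prod.mk.injEq .. ▸ hab
        subst hab1
        have hgh : g = h := by
          have := mul_right_cancel hab2
          exact this
        have htot' : (g * α [a]) * α u' = (h * α [a]) * α w' := by
          rw [mul_assoc, mul_assoc, ← hcons a u', ← hcons a w', htot]
        have := ih u' (g * α [a]) (h * α [a]) (by rw [hab2] at hsub' ⊢; exact hsub') htot'
        have hone : (h * α [a])⁻¹ * (g * α [a]) = 1 := by
          rw [hgh, inv_mul_cancel]
        rw [hone] at this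
        exact ⟨[], w', by simp [hα1, hgh], this, rfl⟩
      | cons_right hsub' =>
        have htot' : g * α (a :: u') = (h * α [b]) * α w' := by
          rw [mul_assoc, ← hcons b w', htot]
        have := ih (a :: u') g (h * α [b]) hsub' htot'
        obtain ⟨x, y, hx, hy, hw'⟩ := this
        refine ⟨b :: x, y, ?_, hy, by simp [hw']⟩
        show α (b :: x) = h⁻¹ * g
        rw [hcons b x, hx, mul_inv_rev]
        group

theorem group_language_cover (A : Type*) [Fintype A]
    (G : Type*) [Group G] [Fintype G]
    (α : List A → G) (hα1 : α [] = 1) (hαm : ∀ u v : List A, α (u ++ v) = α u * α v)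
    (P : Set G) (L : Set (List A)) (hL : L = {w : List A | α w ∈ P}) (hε : [] ∈ L)
    (H : Set (List A)) :
    ∃ F : Finset (List A), ↑F ⊆ H ∧ H ⊆ ⋃ w ∈ F, markedProd L w := by
  classical
  have h1P : (1 : G) ∈ P := by rw [hL] at hε; simpa [hα1] using hε
  have hL₁L : {x : List A | α x = 1} ⊆ L := by
    intro x hx; rw [hL]; simp only [Set.mem_setOf_eq] at hx ⊢; rw [hx]; exact h1P
  -- the key covering relation
  have hcover : ∀ u w : List A, α u = α w →
      List.SublistForall₂ Eq (encAux α 1 u) (encAux α 1 w) → w ∈ markedProd L u := by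
    intro u w hαuw hsub
    have := key_lemma α hα1 hαm w u 1 1 hsub (by rw [hαuw])
    simpa using mpAux_subset (by simpa using hL₁L) hL₁L u this
  -- partial well order
  have hpwo : ∀ f : ℕ → List A, ∃ m n : ℕ, m < n ∧
      (α (f m) = α (f n) ∧
        List.SublistForall₂ Eq (encAux α 1 (f m)) (encAux α 1 (f n))) := by
    have hG : (Set.univ : Set G).PartiallyWellOrderedOn (· = ·) :=
      Set.finite_univ.partiallyWellOrderedOn
    have hAG : (Set.univ : Set (A × G)).PartiallyWellOrderedOn (· = ·) :=
      Set.finite_univ.partiallyWellOrderedOn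
    have hlist := hAG.partiallyWellOrderedOn_sublistForall₂ (· = ·)
    have hprod := hG.prod hlist
    intro f
    obtain ⟨m, n, hmn, h1, h2⟩ :=
      hprod (fun n => ⟨((α (f n), encAux α 1 (f n)) : G × List (A × G)),
        ⟨Set.mem_univ _, fun x _ => Set.mem_univ x⟩⟩)
    exact ⟨m, n, hmn, h1, h2⟩
  by_contra hcon
  push_neg at hcon
  have step : ∀ t : {F : Finset (List A) // ↑F ⊆ H},
      ∃ w, w ∈ H ∧ w ∉ ⋃ u ∈ t.1, markedProd L u := by
    intro t
    have := hcon t.1 t.2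
    rw [Set.not_subset] at this
    obtain ⟨w, hwH, hw⟩ := this
    exact ⟨w, hwH, hw⟩
  choose pick hpickH hpickN using step
  let g : ℕ → {F : Finset (List A) // ↑F ⊆ H} := fun n =>
    Nat.rec ⟨∅, by simp⟩
      (fun _ t => ⟨insert (pick t) t.1, by
        rw [Finset.coe_insert]
        exact Set.insert_subset (hpickH t) t.2⟩) n
  let f : ℕ → List A := fun n => pick (g n)
  have hmono : ∀ m n : ℕ, m ≤ n → (g m).1 ⊆ (g n).1 := by
    intro m n hmn
    induction n with
    | zero => simp_all
    | succ k ihk =>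
      rcases Nat.lt_or_ge m (k + 1) with h | h
      · exact (ihk (Nat.lt_succ_iff.mp h)).trans (Finset.subset_insert _ _)
      · have : m = k + 1 := le_antisymm hmn h
        subst this; exact subset_rfl
  have hmem : ∀ m n : ℕ, m < n → f m ∈ (g n).1 := by
    intro m n hmn
    have h1 : f m ∈ (g (m + 1)).1 := Finset.mem_insert_self _ _
    exact hmono (m + 1) n hmn h1
  obtain ⟨m, n, hmn, hα', hsub⟩ := hpwo f
  have hfn : f n ∈ markedProd L (f m) := hcover (f m) (f n) hα' hsub
  have := hpickN (g n)
  exact this (Set.mem_biUnion (hmem m n hmn) hfn)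
end

section
/- Let M be a finite monoid with idempotent power ω such that (st)^ω s = (st)^ω = t(st)^ω for all s, t ∈ M. Then (qr)^ω (st)^{ω+1} = (qr)^ω q t (st)^ω for all q, r, s, t ∈ M. -/
theorem eq_one_of_simon (M : Type*) [Monoid M] [Fintype M]
    (p : ℕ) (hp : 0 < p) (hidem : ∀ x : M, IsIdempotentElem (x ^ p))
    (h : ∀ s t : M, (s * t) ^ p * s = (s * t) ^ p ∧ t * (s * t) ^ p = (s * t) ^ p) :
    ∀ q r s t : M,
      (q * r) ^ p * (s * t) ^ (p + 1) = (q * r) ^ p * q * t * (s * t) ^ p := by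
  intro q r s t
  have hq : (q * r) ^ p * q = (q * r) ^ p := (h q r).1
  have ht : t * (s * t) ^ p = (s * t) ^ p := (h s t).2
  have haper : (s * t) ^ (p + 1) = (s * t) ^ p := by
    have := (h (s * t) 1).1
    simpa [pow_succ, mul_assoc] using this
  rw [haper, hq, mul_assoc, ht]
end

section
/- Let A be a finite alphabet, M a finite monoid, α : A* → M a morphism. Every word w ∈ A^+ with |w| > |M|² admits an α-guarded decomposition (w_1, …, w_{n+1}) with n ≥ 1: nonempty words w_i with w = w_1⋯w_{n+1} such that for each 1 ≤ i ≤ n there is an idempotent e_i ∈ α(A^+) with α(w_i)e_i = α(w_i) and e_iα(w_{i+1}) = α(w_{i+1}). -/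
private lemma pow_stab {M : Type*} [Monoid M] (a : M) {p d : ℕ} (hd : 1 ≤ d)
    (h : a ^ p = a ^ (p + d)) : ∀ t m, p ≤ m → a ^ m = a ^ (m + t * d) := by
  have step : ∀ m, p ≤ m → a ^ m = a ^ (m + d) := by
    intro m hm
    have h1 : a ^ m = a ^ p * a ^ (m - p) := by rw [← pow_add]; congr 1; omega
    rw [h1, h, ← pow_add]; congr 1; omega
  intro t
  induction t with
  | zero => simp
  | succ t ih =>
    intro m hm
    have := step m hm
    rw [this, ih (m + d) (by omega)]
    congr 1; ring

private lemma exists_idem_pow {M : Type*} [Monoid M] [Fintype M] (a : M) :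
    ∃ k, 1 ≤ k ∧ IsIdempotentElem (a ^ k) := by
  obtain ⟨i, j, hne, heq⟩ := Fintype.exists_ne_map_eq_of_card_lt
    (fun k : Fin (Fintype.card M + 1) => a ^ ((k : ℕ) + 1)) (by simp)
  rcases Nat.lt_or_ge (i : ℕ) (j : ℕ) with hij | hij
  · have hstab := pow_stab a (d := (j : ℕ) - (i : ℕ)) (p := (i : ℕ) + 1) (by omega)
      (by rw [heq]; congr 1; omega)
    refine ⟨((i : ℕ) + 1) * ((j : ℕ) - (i : ℕ)), Nat.mul_pos (by omega) (by omega), ?_⟩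
    unfold IsIdempotentElem
    rw [← pow_add]
    exact (hstab ((i : ℕ) + 1) (((i : ℕ) + 1) * ((j : ℕ) - (i : ℕ)))
      (Nat.le_mul_of_pos_right _ (by omega))).symm
  · have hij' : (j : ℕ) < (i : ℕ) := by
      rcases Nat.lt_or_ge (j : ℕ) (i : ℕ) with h | h
      · exact h
      · exact absurd (Fin.ext (by omega)) hne
    have hstab := pow_stab a (d := (i : ℕ) - (j : ℕ)) (p := (j : ℕ) + 1) (by omega)
      (by rw [← heq]; congr 1; omega)
    refine ⟨((j : ℕ) + 1) * ((i : ℕ) - (j : ℕ)), Nat.mul_pos (by omega) (by omega), ?_⟩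
    unfold IsIdempotentElem
    rw [← pow_add]
    exact (hstab ((j : ℕ) + 1) (((j : ℕ) + 1) * ((i : ℕ) - (j : ℕ)))
      (Nat.le_mul_of_pos_right _ (by omega))).symm

private lemma absorb_right {M : Type*} [Monoid M] {a b : M} (h : a * b = a) :
    ∀ k, a * b ^ k = a := by
  intro k; induction k with
  | zero => simp
  | succ k ih => rw [pow_succ, ← mul_assoc, ih, h]

private lemma absorb_left {M : Type*} [Monoid M] {a b : M} (h : a * b = b) :
    ∀ k, a ^ k * b = b := by
  intro k; induction k with
  | zero => simp
  | succ k ih => rw [pow_succ, mul_assoc, h, ih]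

theorem exists_guarded_decomposition (A : Type*) [Fintype A]
    (M : Type*) [Monoid M] [Fintype M]
    (α : List A → M) (hα1 : α [] = 1) (hαm : ∀ u v : List A, α (u ++ v) = α u * α v)
    (w : List A) (hw : w ≠ []) (hlen : Fintype.card M ^ 2 < w.length) :
    ∃ ws : List (List A), 2 ≤ ws.length ∧ (∀ u ∈ ws, u ≠ []) ∧ ws.flatten = w ∧
      ∀ i : ℕ, (hi : i + 1 < ws.length) →
        ∃ e : M, (∃ x : List A, x ≠ [] ∧ α x = e) ∧ IsIdempotentElem e ∧
          α (ws.get ⟨i, by omega⟩) * e = α (ws.get ⟨i, by omega⟩) ∧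
          e * α (ws.get ⟨i + 1, hi⟩) = α (ws.get ⟨i + 1, hi⟩) := by
  -- pigeonhole on pairs (prefix image, suffix image)
  obtain ⟨i', j', hne, heq⟩ := Fintype.exists_ne_map_eq_of_card_lt
    (fun k : Fin w.length => (α (w.take (k : ℕ)), α (w.drop (k : ℕ))))
    (by simpa [sq] using hlen)
  -- wlog i < j
  obtain ⟨i, j, hij, hjlt, hpre, hsuf⟩ :
      ∃ i j : ℕ, i < j ∧ j < w.length ∧
        (α (w.take i) = α (w.take j) ∧ α (w.drop i) = α (w.drop j)) := by
    rcases Nat.lt_or_ge (i' : ℕ) (j' : ℕ) with h | h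
    · exact ⟨i', j', h, j'.isLt, congrArg Prod.fst heq, congrArg Prod.snd heq⟩
    · have : (j' : ℕ) < (i' : ℕ) := by
        rcases Nat.lt_or_ge (j' : ℕ) (i' : ℕ) with h2 | h2
        · exact h2
        · exact absurd (Fin.ext (by omega)) hne
      exact ⟨j', i', this, i'.isLt, (congrArg Prod.fst heq).symm, (congrArg Prod.snd heq).symm⟩
  set m : List A := (w.drop i).take (j - i) with hm
  have hmlen : 0 < m.length := by
    simp only [hm, List.length_take, List.length_drop]
    omega
  have htakej : w.take j = w.take i ++ m := by
    rw [hm, ← List.take_add]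
    congr 1; omega
  have hdropi : w.drop i = m ++ w.drop j := by
    conv_lhs => rw [← List.take_append_drop (j - i) (w.drop i)]
    rw [hm, List.drop_drop]
    congr 2; omega
  -- absorption facts
  have habs1 : α (w.take i) * α m = α (w.take i) := by
    conv_rhs => rw [hpre, htakej, hαm]
  have habs2 : α m * α (w.drop j) = α (w.drop j) := by
    conv_rhs => rw [← hsuf, hdropi, hαm]
  obtain ⟨k, hk1, hke⟩ := exists_idem_pow (α m)
  refine ⟨[w.take j, w.drop j], by simp, ?_, by simp, ?_⟩
  · intro u hu
    simp only [List.mem_cons, List.mem_singleton] at hu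
    rcases hu with rfl | rfl | h
    · have : 0 < (w.take j).length := by
        simp only [List.length_take]; omega
      exact List.ne_nil_of_length_pos this
    · have : 0 < (w.drop j).length := by
        simp only [List.length_drop]; omega
      exact List.ne_nil_of_length_pos this
    · simp at h
  · intro n hn
    have hn0 : n = 0 := by simp at hn; omega
    subst hn0
    refine ⟨α m ^ k, ⟨(List.replicate k m).flatten, ?_, ?_⟩, hke, ?_, ?_⟩
    · have : 0 < (List.replicate k m).flatten.length := by
        rw [List.length_flatten]
        simp only [List.map_replicate, List.sum_replicate, smul_eq_mul]
        positivity
      exact List.ne_nil_of_length_pos this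
    · clear hn hk1 hke
      induction k with
      | zero => simpa using hα1
      | succ k ih =>
        have : (List.replicate (k + 1) m).flatten = m ++ (List.replicate k m).flatten := by
          simp [List.replicate_succ]
        rw [this, hαm, ih, pow_succ']
    · show α (w.take j) * α m ^ k = α (w.take j)
      rw [htakej, hαm, mul_assoc, ← pow_succ']
      rw [show α (w.take i) * α m ^ (k + 1) = α (w.take i) from absorb_right habs1 (k + 1)]
      exact habs1.symm
    · show α m ^ k * α (w.drop j) = α (w.drop j)
      exact absorb_left habs2 k
end
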